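/- Suppose X⋆ ∈ ℝ^{I₁×I₂×I₃} has tubal rank R with skinny t-SVD X⋆ = U⋆*Σ⋆*V⋆ᵀ satisfying the tensor μ-incoherence conditions, let 0 < ε < 1 and 0 < τ ≤ 1, and let Q_k be an optimal alignment tensor between (L_k,R_k) and (L⋆,R⋆). If dist(L_k,R_k;L⋆,R⋆) ≤ (ε/√I₃)·τ^k·σ_min(X⋆) and √I₁·‖Δ_L*Σ⋆^{1/2}‖_{2,∞} ∨ √I₂·‖Δ_R*Σ⋆^{1/2}‖_{2,∞} ≤ √(μR)·τ^k·σ_min(X⋆), where Δ_L := L_k*Q_k − L⋆ and Δ_R := R_k*Q_k^{−ᵀ} − R⋆, then ‖X⋆ − L_k*R_kᵀ‖_∞ ≤ (3/√(I₁I₂))·μR·τ^k·σ_min(X⋆). -/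

import Mathlib

open scoped BigOperators
open Matrix

/-- An order-3 real tensor. -/
abbrev Tensor (I₁ I₂ I₃ : ℕ) := Fin I₁ → Fin I₂ → Fin I₃ → ℝ

namespace RTPCA

variable {I₁ I₂ I₃ J R : ℕ}

/-- The t-product, computed by circular convolution along the third mode
(equivalently, slice-wise products in the Fourier domain). -/
noncomputable def tprod (A : Tensor I₁ I₂ I₃) (B : Tensor I₂ J I₃) : Tensor I₁ J I₃ :=
  fun i j k => ∑ l : Fin I₂, ∑ t : Fin I₃, A i l t * B l j (k - t)

/-- The tensor transpose: transpose each frontal slice and reverse the order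
of the frontal slices 2 through I₃. -/
def tT (A : Tensor I₁ I₂ I₃) : Tensor I₂ I₁ I₃ :=
  fun j i k => A i j (-k)

/-- The identity tensor: first frontal slice is the identity, the rest are zero. -/
def idT (R I₃ : ℕ) : Tensor R R I₃ :=
  fun i j k => if i = j ∧ (k : ℕ) = 0 then 1 else 0

/-- Discrete Fourier transform along the third mode. -/
noncomputable def dft (A : Tensor I₁ I₂ I₃) (i : Fin I₁) (j : Fin I₂) (k : Fin I₃) : ℂ :=
  ∑ t : Fin I₃, (A i j t : ℂ) *
    Complex.exp (-(2 * Real.pi * Complex.I * (k.val : ℂ) * (t.val : ℂ)) / (I₃ : ℂ))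

/-- Fourier-domain frontal slice. -/
noncomputable def fSlice (A : Tensor I₁ I₂ I₃) (k : Fin I₃) : Matrix (Fin I₁) (Fin I₂) ℂ :=
  Matrix.of fun i j => dft A i j k

/-- Inverse DFT along the third mode (real part). -/
noncomputable def invDft (F : Fin I₁ → Fin I₂ → Fin I₃ → ℂ) : Tensor I₁ I₂ I₃ :=
  fun i j t =>
    ((∑ k : Fin I₃, F i j k *
      Complex.exp ((2 * Real.pi * Complex.I * (k.val : ℂ) * (t.val : ℂ)) / (I₃ : ℂ))) / (I₃ : ℂ)).re

/-- Squared Frobenius norm. -/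
noncomputable def fro2 (A : Tensor I₁ I₂ I₃) : ℝ := ∑ i, ∑ j, ∑ k, (A i j k) ^ 2

/-- Frobenius norm. -/
noncomputable def froNorm (A : Tensor I₁ I₂ I₃) : ℝ := Real.sqrt (fro2 A)

/-- Entrywise sup norm ‖A‖_∞. -/
noncomputable def infNorm (A : Tensor I₁ I₂ I₃) : ℝ := ⨆ i, ⨆ j, ⨆ k, |A i j k|

/-- ℓ_{2,∞} norm: largest ℓ₂ norm of a horizontal slice. -/
noncomputable def twoInfNorm (A : Tensor I₁ I₂ I₃) : ℝ :=
  ⨆ i, Real.sqrt (∑ j, ∑ k, (A i j k) ^ 2)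

/-- ℓ_{1,∞} norm: largest ℓ₁ norm of a horizontal slice. -/
noncomputable def oneInfNorm (A : Tensor I₁ I₂ I₃) : ℝ := ⨆ i, ∑ j, ∑ k, |A i j k|

/-- Spectral norm (largest singular value) of a complex matrix. -/
noncomputable def matSpecNorm {m n : ℕ} (M : Matrix (Fin m) (Fin n) ℂ) : ℝ :=
  ‖LinearMap.toContinuousLinearMap (Matrix.toEuclideanLin M)‖

/-- Tensor spectral norm = tensor operator norm: the largest singular value of
the Fourier-domain frontal slices. -/
noncomputable def specNorm (A : Tensor I₁ I₂ I₃) : ℝ :=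
  ⨆ k : Fin I₃, matSpecNorm (fSlice A k)

/-- f-diagonal in the Fourier domain with strictly positive diagonal entries. -/
def FDiagPos (S : Tensor R R I₃) : Prop :=
  (∀ k, ∀ i j : Fin R, i ≠ j → fSlice S k i j = 0) ∧
  (∀ k, ∀ i : Fin R, 0 < (fSlice S k i i).re ∧ (fSlice S k i i).im = 0)

/-- f-diagonal in the Fourier domain with nonnegative diagonal entries. -/
def FDiagNonneg (S : Tensor R R I₃) : Prop :=
  (∀ k, ∀ i j : Fin R, i ≠ j → fSlice S k i j = 0) ∧
  (∀ k, ∀ i : Fin R, 0 ≤ (fSlice S k i i).re ∧ (fSlice S k i i).im = 0)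

/-- Skinny t-SVD with tubal rank R (strictly positive Fourier-domain diagonal). -/
structure IsSkinnyTSVD (X : Tensor I₁ I₂ I₃) (U : Tensor I₁ R I₃)
    (S : Tensor R R I₃) (V : Tensor I₂ R I₃) : Prop where
  decomp : X = tprod (tprod U S) (tT V)
  orthU : tprod (tT U) U = idT R I₃
  orthV : tprod (tT V) V = idT R I₃
  diag : FDiagPos S

/-- Skinny t-SVD with tubal rank at most R (nonnegative diagonal allowed). -/
structure IsSkinnyTSVDLe (X : Tensor I₁ I₂ I₃) (U : Tensor I₁ R I₃)
    (S : Tensor R R I₃) (V : Tensor I₂ R I₃) : Prop where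
  decomp : X = tprod (tprod U S) (tT V)
  orthU : tprod (tT U) U = idT R I₃
  orthV : tprod (tT V) V = idT R I₃
  diag : FDiagNonneg S

/-- σ_min: the smallest Fourier-domain diagonal entry of Σ. -/
noncomputable def sigmaMin (S : Tensor R R I₃) : ℝ :=
  ⨅ k : Fin I₃, ⨅ i : Fin R, (fSlice S k i i).re

/-- σ_max (= σ₁): the largest Fourier-domain diagonal entry of Σ. -/
noncomputable def sigmaMax (S : Tensor R R I₃) : ℝ :=
  ⨆ k : Fin I₃, ⨆ i : Fin R, (fSlice S k i i).re

/-- Condition number κ = σ_max / σ_min. -/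
noncomputable def condNum (S : Tensor R R I₃) : ℝ := sigmaMax S / sigmaMin S

/-- Σ^{1/2}: entrywise square roots in the Fourier domain. -/
noncomputable def sqrtT (S : Tensor R R I₃) : Tensor R R I₃ :=
  invDft fun i j k => (Real.sqrt ((dft S i j k).re) : ℂ)

/-- Σ^{-1/2}: entrywise reciprocal square roots in the Fourier domain. -/
noncomputable def invSqrtT (S : Tensor R R I₃) : Tensor R R I₃ :=
  invDft fun i j k => (((Real.sqrt ((dft S i j k).re))⁻¹ : ℝ) : ℂ)

/-- `Qi` is a two-sided t-product inverse of `Q` (i.e. `Q ∈ GL(R)`). -/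
def TInv (Q Qi : Tensor R R I₃) : Prop :=
  tprod Q Qi = idT R I₃ ∧ tprod Qi Q = idT R I₃

/-- Alignment error (the quantity inside the infimum defining `distT`)
for a given invertible Q with inverse Qi. -/
noncomputable def alignErr (L Ls : Tensor I₁ R I₃) (Rt Rs : Tensor I₂ R I₃)
    (Sh : Tensor R R I₃) (Q Qi : Tensor R R I₃) : ℝ :=
  Real.sqrt ((froNorm (tprod (tprod L Q - Ls) Sh)) ^ 2 +
    (froNorm (tprod (tprod Rt (tT Qi) - Rs) Sh)) ^ 2)

/-- The distance metric dist(L,R;L⋆,R⋆): the infimum of alignment errors over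
invertible tensors Q, where `Sh` is Σ⋆^{1/2}. -/
noncomputable def distT (L Ls : Tensor I₁ R I₃) (Rt Rs : Tensor I₂ R I₃)
    (Sh : Tensor R R I₃) : ℝ :=
  sInf {d : ℝ | ∃ Q Qi : Tensor R R I₃, TInv Q Qi ∧ d = alignErr L Ls Rt Rs Sh Q Qi}

/-- Q (with inverse Qi) is an optimal alignment tensor: it attains the infimum
defining the distance metric. -/
def IsOptAlign (L Ls : Tensor I₁ R I₃) (Rt Rs : Tensor I₂ R I₃)
    (Sh : Tensor R R I₃) (Q Qi : Tensor R R I₃) : Prop :=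
  TInv Q Qi ∧ alignErr L Ls Rt Rs Sh Q Qi = distT L Ls Rt Rs Sh

/-- Entrywise soft-thresholding. -/
noncomputable def softThresh (ζ : ℝ) (A : Tensor I₁ I₂ I₃) : Tensor I₁ I₂ I₃ :=
  fun i j k => Real.sign (A i j k) * max 0 (|A i j k| - ζ)

/-- Support: the set of index triples at which the tensor is nonzero. -/
def supp (A : Tensor I₁ I₂ I₃) : Set (Fin I₁ × Fin I₂ × Fin I₃) :=
  {p | A p.1 p.2.1 p.2.2 ≠ 0}

/-- α-sparsity: every horizontal, lateral and frontal slice has at most an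
α fraction of nonzero entries. -/
def IsSparse (α : ℝ) (S : Tensor I₁ I₂ I₃) : Prop :=
  (∀ i₁ : Fin I₁, ({p : Fin I₂ × Fin I₃ | S i₁ p.1 p.2 ≠ 0}.ncard : ℝ) ≤ α * I₂ * I₃) ∧
  (∀ i₂ : Fin I₂, ({p : Fin I₁ × Fin I₃ | S p.1 i₂ p.2 ≠ 0}.ncard : ℝ) ≤ α * I₁ * I₃) ∧
  (∀ i₃ : Fin I₃, ({p : Fin I₁ × Fin I₂ | S p.1 p.2 i₃ ≠ 0}.ncard : ℝ) ≤ α * I₁ * I₂)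

/-- Tensor μ-incoherence conditions for the skinny t-SVD factors U, V. -/
def Incoherent (μ : ℝ) (U : Tensor I₁ R I₃) (V : Tensor I₂ R I₃) : Prop :=
  twoInfNorm U ≤ Real.sqrt (μ * R / I₁) ∧ twoInfNorm V ≤ Real.sqrt (μ * R / I₂)

/-- Top-R truncated t-SVD of A: a skinny t-SVD-shaped factorization which, in
every Fourier-domain frontal slice, keeps R largest singular values together
with their singular vectors (the residual is orthogonal to the kept singular
vectors and its spectral norm is at most every kept singular value). -/
structure IsTruncTSVD (A : Tensor I₁ I₂ I₃) (U : Tensor I₁ R I₃)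
    (S : Tensor R R I₃) (V : Tensor I₂ R I₃) : Prop where
  orthU : tprod (tT U) U = idT R I₃
  orthV : tprod (tT V) V = idT R I₃
  diag : FDiagNonneg S
  leftOrth : ∀ k, (fSlice U k)ᴴ * (fSlice A k - fSlice (tprod (tprod U S) (tT V)) k) = 0
  rightOrth : ∀ k, (fSlice A k - fSlice (tprod (tprod U S) (tT V)) k) * fSlice V k = 0
  topR : ∀ k, ∀ r : Fin R,
    matSpecNorm (fSlice A k - fSlice (tprod (tprod U S) (tT V)) k) ≤ (fSlice S k r r).re

end RTPCA

open RTPCA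

/-!
Write `Δ_L = L_k * Q - L⋆` and `Δ_R = R_k * Q^{-ᵀ} - R⋆`. Comparing Fourier-domain slices, where the
t-product becomes the matrix product and `Σ⋆^{1/2}` is a real diagonal square root of `Σ⋆`, gives
`X⋆ - L_k * R_kᵀ = -(Δ_L * Σ⋆^{1/2}) * V⋆ᵀ - U⋆ * (Δ_R * Σ⋆^{1/2})ᵀ - Δ_L * Δ_Rᵀ`.
By Cauchy–Schwarz, an entry of `A * Bᵀ` is at most the product of the ℓ₂ norms of the matching
horizontal slices of `A` and `B`, and by Parseval, right multiplication by `Σ⋆^{1/2}` multiplies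
these norms by at least `√σ_min`. Incoherence and the ℓ_{2,∞} hypothesis then bound each of the
three terms by `μRτ^kσ_min/√(I₁I₂)`; for the quadratic term this uses `τ^{2k} ≤ τ^k`.
-/

open Complex Finset
open scoped ComplexConjugate

noncomputable def dftRoot (n : ℕ) : ℂ := exp (-(2 * Real.pi * I) / n)

section DftRoot

variable {n : ℕ}

lemma dftRoot_ne_zero : dftRoot n ≠ 0 := exp_ne_zero _

lemma isPrimitiveRoot_dftRoot (hn : n ≠ 0) : IsPrimitiveRoot (dftRoot n) n := by
  have h := (isPrimitiveRoot_exp n hn).inv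
  rwa [← exp_neg, ← neg_div] at h

lemma conj_dftRoot_zpow (a : ℤ) : conj (dftRoot n ^ a) = dftRoot n ^ (-a) := by
  rw [map_zpow₀, _root_.zpow_neg, ← _root_.inv_zpow, dftRoot, ← exp_conj, ← exp_neg]
  congr 2
  simp [map_div₀, neg_div, map_ofNat]

lemma dftRoot_zpow_congr (hn : n ≠ 0) {a b : ℤ} (h : a ≡ b [ZMOD n]) :
    dftRoot n ^ a = dftRoot n ^ b := by
  rw [show b = a + (b - a) by ring, zpow_add₀ dftRoot_ne_zero,
    ((isPrimitiveRoot_dftRoot hn).zpow_eq_one_iff_dvd _).2 h.dvd, mul_one]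

lemma sum_dftRoot_zpow (hn : n ≠ 0) (m : ℤ) :
    ∑ k : Fin n, dftRoot n ^ ((k : ℤ) * m) = if (n : ℤ) ∣ m then (n : ℂ) else 0 := by
  have hω := isPrimitiveRoot_dftRoot hn
  simp_rw [mul_comm _ m, _root_.zpow_mul, zpow_natCast]
  rw [Fin.sum_univ_eq_sum_range (fun k => (dftRoot n ^ m) ^ k)]
  split_ifs with h
  · simp [(hω.zpow_eq_one_iff_dvd m).2 h]
  · have hne : dftRoot n ^ m ≠ 1 := fun h' => h ((hω.zpow_eq_one_iff_dvd m).1 h')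
    rw [geom_sum_eq hne, ← zpow_natCast, ← _root_.zpow_mul, mul_comm, _root_.zpow_mul, zpow_natCast,
      hω.pow_eq_one, _root_.one_zpow, sub_self, zero_div]

lemma sum_dftRoot_zpow_sub (a b : Fin n) :
    ∑ k : Fin n, dftRoot n ^ ((k : ℤ) * (a - b)) = if a = b then (n : ℂ) else 0 := by
  rw [sum_dftRoot_zpow a.pos.ne']
  congr 1
  refine propext ⟨fun h => Fin.ext ?_, fun h => by simp [h]⟩
  have := Int.eq_zero_of_abs_lt_dvd h (by rw [abs_sub_lt_iff]; omega)
  omega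

end DftRoot

lemma Fin.intCast_val_add_modEq {n : ℕ} (s u : Fin n) :
    (((s + u : Fin n) : ℕ) : ℤ) ≡ s + u [ZMOD n] := by
  rw [Fin.val_add, Int.natCast_mod, Nat.cast_add]
  exact Int.mod_modEq _ _

lemma Fin.intCast_val_neg_modEq {n : ℕ} (t : Fin n) :
    (((-t : Fin n) : ℕ) : ℤ) ≡ -t [ZMOD n] := by
  rw [Fin.val_neg', Int.natCast_mod, Nat.cast_sub t.isLt.le]
  refine (Int.mod_modEq _ _).trans (Int.modEq_iff_dvd.2 ⟨-1, by ring⟩)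

lemma Matrix.mul_mul_self_mul_conjTranspose_sub {m n r α : Type*} [Fintype r] [DecidableEq r]
    [CommRing α] [StarRing α] (U L : Matrix m r α) (V Rt : Matrix n r α) (H Q Qi : Matrix r r α)
    (hH : Hᴴ = H) (hQ : Q * Qi = 1) :
    U * (H * H) * Vᴴ - L * Rtᴴ =
      -((L * Q - U * H) * H * Vᴴ) - U * ((Rt * Qiᴴ - V * H) * H)ᴴ
        - (L * Q - U * H) * (Rt * Qiᴴ - V * H)ᴴ := by
  have hL : L * Rtᴴ = L * Q * (Rt * Qiᴴ)ᴴ := by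
    rw [conjTranspose_mul, conjTranspose_conjTranspose, Matrix.mul_assoc, ← Matrix.mul_assoc Q,
      hQ, Matrix.one_mul]
  rw [hL]
  generalize L * Q = P
  generalize Rt * Qiᴴ = W
  simp only [conjTranspose_mul, conjTranspose_sub, hH, Matrix.mul_sub, Matrix.sub_mul,
    Matrix.mul_assoc]
  abel

lemma add_add_le_three_mul {s₁ s₂ σ m t a b u v x : ℝ} (hs₁ : 0 < s₁) (hs₂ : 0 < s₂)
    (hσ : 0 < σ) (ht₀ : 0 ≤ t) (ht₁ : t ≤ 1) (ha₀ : 0 ≤ a) (hb₀ : 0 ≤ b) (hu₀ : 0 ≤ u) (hv₀ : 0 ≤ v)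
    (ha : s₁ * a ≤ m * t * σ) (hb : s₂ * b ≤ m * t * σ) (hu : s₁ * u ≤ m) (hv : s₂ * v ≤ m)
    (hx : σ * x ≤ a * b) :
    a * v + u * b + x ≤ 3 / (s₁ * s₂) * m ^ 2 * t * σ := by
  have hc : 0 ≤ m * t * σ := (mul_nonneg hs₁.le ha₀).trans ha
  have hav : (s₁ * a) * (s₂ * v) ≤ (m * t * σ) * m := mul_le_mul ha hv (by positivity) hc
  have hub : (s₁ * u) * (s₂ * b) ≤ m * (m * t * σ) :=
    mul_le_mul hu hb (by positivity) ((mul_nonneg hs₁.le hu₀).trans hu)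
  have hab : (s₁ * a) * (s₂ * b) ≤ (m * t * σ) * (m * t * σ) :=
    mul_le_mul ha hb (by positivity) hc
  have hx' : s₁ * s₂ * x ≤ m ^ 2 * t * σ := by
    refine le_of_mul_le_mul_left ?_ hσ
    calc σ * (s₁ * s₂ * x) = s₁ * s₂ * (σ * x) := by ring
      _ ≤ s₁ * s₂ * (a * b) := mul_le_mul_of_nonneg_left hx (by positivity)
      _ ≤ (m * t * σ) * (m * t * σ) := by linarith
      _ = σ * (m ^ 2 * t * σ) * t := by ring
      _ ≤ σ * (m ^ 2 * t * σ) :=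
        mul_le_of_le_one_right (mul_nonneg hσ.le (mul_nonneg (by positivity) hσ.le)) ht₁
  rw [div_mul_eq_mul_div, div_mul_eq_mul_div, div_mul_eq_mul_div, le_div_iff₀ (mul_pos hs₁ hs₂)]
  linarith

namespace RTPCA

variable {I₁ I₂ I₃ J R : ℕ}

lemma dft_eq_sum (A : Tensor I₁ I₂ I₃) (i : Fin I₁) (j : Fin I₂) (k : Fin I₃) :
    dft A i j k = ∑ t, (A i j t : ℂ) * dftRoot I₃ ^ ((k : ℤ) * t) := by
  unfold dft dftRoot
  refine sum_congr rfl fun t _ => ?_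
  rw [← exp_int_mul]
  congr 2
  push_cast
  ring

lemma conj_dft (A : Tensor I₁ I₂ I₃) (i : Fin I₁) (j : Fin I₂) (k : Fin I₃) :
    conj (dft A i j k) = ∑ t, (A i j t : ℂ) * dftRoot I₃ ^ (-((k : ℤ) * t)) := by
  simp only [dft_eq_sum, map_sum, map_mul, conj_ofReal, conj_dftRoot_zpow]

lemma sum_dft_mul_dftRoot_zpow (A : Tensor I₁ I₂ I₃) (i : Fin I₁) (j : Fin I₂) (t : Fin I₃) :
    ∑ k, dft A i j k * dftRoot I₃ ^ (-((k : ℤ) * t)) = I₃ * A i j t := by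
  simp_rw [dft_eq_sum, sum_mul, mul_assoc, ← zpow_add₀ dftRoot_ne_zero]
  rw [sum_comm]
  simp_rw [← mul_neg, ← mul_add, ← sub_eq_add_neg, ← mul_sum, sum_dftRoot_zpow_sub]
  simp [mul_comm]

lemma fSlice_injective : Function.Injective (fSlice : Tensor I₁ I₂ I₃ → _) := by
  intro A B h
  funext i j t
  have hdft : ∀ k, dft A i j k = dft B i j k := fun k => congrFun₂ (congrFun h k) i j
  have hI : (I₃ : ℂ) ≠ 0 := Nat.cast_ne_zero.2 t.pos.ne'
  have h := sum_dft_mul_dftRoot_zpow A i j t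
  simp_rw [hdft, sum_dft_mul_dftRoot_zpow B i j t] at h
  exact_mod_cast (mul_left_cancel₀ hI h).symm

lemma sum_normSq_dft (A : Tensor I₁ I₂ I₃) (i : Fin I₁) (j : Fin I₂) :
    ∑ k, normSq (dft A i j k) = I₃ * ∑ t, A i j t ^ 2 := by
  apply ofReal_injective
  push_cast
  calc ∑ k, (normSq (dft A i j k) : ℂ) = ∑ k, dft A i j k * conj (dft A i j k) := by
        simp [mul_conj]
    _ = ∑ t, (A i j t : ℂ) * ∑ k, dft A i j k * dftRoot I₃ ^ (-((k : ℤ) * t)) := by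
        simp_rw [conj_dft, mul_sum]
        rw [sum_comm]
        simp_rw [mul_left_comm]
    _ = I₃ * ∑ t, (A i j t : ℂ) ^ 2 := by
        simp_rw [sum_dft_mul_dftRoot_zpow, mul_sum]
        exact sum_congr rfl fun _ _ => by ring

lemma fSlice_sub (A B : Tensor I₁ I₂ I₃) (k : Fin I₃) :
    fSlice (A - B) k = fSlice A k - fSlice B k := by
  ext i j
  simp [fSlice, dft, sub_mul, sum_sub_distrib]

lemma fSlice_neg (A : Tensor I₁ I₂ I₃) (k : Fin I₃) : fSlice (-A) k = -fSlice A k := by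
  ext i j
  simp [fSlice, dft]

lemma fSlice_tprod (A : Tensor I₁ I₂ I₃) (B : Tensor I₂ J I₃) (k : Fin I₃) :
    fSlice (tprod A B) k = fSlice A k * fSlice B k := by
  have : NeZero I₃ := ⟨k.pos.ne'⟩
  ext i j
  simp only [fSlice, of_apply, mul_apply, dft_eq_sum, tprod, mul_sum]
  push_cast
  simp only [sum_mul]
  rw [sum_comm]
  refine sum_congr rfl fun l _ => ?_
  rw [sum_comm]
  conv_rhs => rw [sum_comm]
  refine sum_congr rfl fun s _ => ?_
  rw [← Equiv.sum_comp (Equiv.addRight s)]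
  refine sum_congr rfl fun u _ => ?_
  simp only [Equiv.coe_addRight, add_sub_cancel_right]
  rw [dftRoot_zpow_congr k.pos.ne' ((Fin.intCast_val_add_modEq u s).mul_left _), mul_add,
    zpow_add₀ dftRoot_ne_zero]
  ring

lemma dft_tT (A : Tensor I₁ I₂ I₃) (j : Fin I₂) (i : Fin I₁) (k : Fin I₃) :
    dft (tT A) j i k = conj (dft A i j k) := by
  rw [conj_dft, dft_eq_sum, ← Equiv.sum_comp (Equiv.neg (Fin I₃))]
  refine sum_congr rfl fun t _ => ?_
  simp only [tT, Equiv.neg_apply, neg_neg]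
  rw [dftRoot_zpow_congr k.pos.ne' ((Fin.intCast_val_neg_modEq t).mul_left _), mul_neg]

lemma fSlice_tT (A : Tensor I₁ I₂ I₃) (k : Fin I₃) : fSlice (tT A) k = (fSlice A k)ᴴ := by
  ext j i
  exact dft_tT A j i k

lemma dft_neg (A : Tensor I₁ I₂ I₃) (i : Fin I₁) (j : Fin I₂) (k : Fin I₃) :
    dft A i j (-k) = conj (dft A i j k) := by
  rw [conj_dft, dft_eq_sum]
  refine sum_congr rfl fun t _ => ?_
  rw [dftRoot_zpow_congr k.pos.ne' ((Fin.intCast_val_neg_modEq k).mul_right _), neg_mul]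

lemma fSlice_idT (k : Fin I₃) : fSlice (idT R I₃) k = 1 := by
  have : NeZero I₃ := ⟨k.pos.ne'⟩
  ext i j
  rw [fSlice, of_apply, dft_eq_sum, sum_eq_single 0]
  · by_cases h : i = j <;> simp [idT, h, one_apply]
  · intro t _ ht
    simp [idT, Fin.val_ne_zero_iff.2 ht]
  · simp

lemma dft_invDft (G : Fin I₁ → Fin I₂ → Fin I₃ → ℂ)
    (hG : ∀ i j m, conj (G i j m) = G i j (-m)) (i : Fin I₁) (j : Fin I₂) (k : Fin I₃) :
    dft (invDft G) i j k = G i j k := by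
  set z : Fin I₃ → ℂ := fun t => (∑ m, G i j m * dftRoot I₃ ^ (-((m : ℤ) * t))) / I₃
  have hz : ∀ t, (invDft G i j t : ℂ) = z t := by
    intro t
    have hconj : conj (z t) = z t := by
      simp only [z, map_div₀, map_sum, map_mul, map_natCast, conj_dftRoot_zpow, neg_neg, hG]
      congr 1
      rw [← Equiv.sum_comp (Equiv.neg (Fin I₃))]
      refine sum_congr rfl fun m _ => ?_
      rw [Equiv.neg_apply, neg_neg,
        dftRoot_zpow_congr k.pos.ne' ((Fin.intCast_val_neg_modEq m).mul_right _), neg_mul]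
    rw [← conj_eq_iff_re.1 hconj]
    congr 1
    simp only [invDft, z, dftRoot, ← exp_int_mul]
    congr 3
    funext m
    congr 2
    push_cast
    ring
  rw [dft_eq_sum]
  simp_rw [hz, z, div_mul_eq_mul_div, ← sum_div, sum_mul, mul_assoc, ← zpow_add₀ dftRoot_ne_zero]
  rw [sum_comm]
  simp_rw [show ∀ m t : Fin I₃, -((m : ℤ) * t) + k * t = t * (k - m) from fun _ _ => by ring,
    ← mul_sum, sum_dftRoot_zpow_sub]
  simp [Nat.cast_ne_zero.2 k.pos.ne']

lemma FDiagPos.fDiagNonneg {S : Tensor R R I₃} (h : FDiagPos S) : FDiagNonneg S :=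
  ⟨h.1, fun k i => ⟨(h.2 k i).1.le, (h.2 k i).2⟩⟩

lemma fSlice_sqrtT (S : Tensor R R I₃) (k : Fin I₃) :
    fSlice (sqrtT S) k = of fun i j => ((√(fSlice S k i j).re : ℝ) : ℂ) := by
  ext i j
  exact dft_invDft _ (fun i j m => by rw [conj_ofReal, dft_neg, conj_re]) i j k

lemma fSlice_sqrtT_eq_diagonal {S : Tensor R R I₃} (hS : FDiagNonneg S) (k : Fin I₃) :
    fSlice (sqrtT S) k = diagonal fun i => ((√(fSlice S k i i).re : ℝ) : ℂ) := by
  rw [fSlice_sqrtT]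
  ext i j
  by_cases h : i = j
  · subst h
    simp
  · simp [diagonal_apply_ne _ h, hS.1 k i j h]

lemma conjTranspose_fSlice_sqrtT {S : Tensor R R I₃} (hS : FDiagNonneg S) (k : Fin I₃) :
    (fSlice (sqrtT S) k)ᴴ = fSlice (sqrtT S) k := by
  rw [fSlice_sqrtT_eq_diagonal hS, diagonal_conjTranspose]
  simp [Pi.star_def]

lemma fSlice_sqrtT_mul_self {S : Tensor R R I₃} (hS : FDiagNonneg S) (k : Fin I₃) :
    fSlice (sqrtT S) k * fSlice (sqrtT S) k = fSlice S k := by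
  rw [fSlice_sqrtT_eq_diagonal hS, diagonal_mul_diagonal]
  ext i j
  by_cases h : i = j
  · subst h
    rw [diagonal_apply_eq, ← ofReal_mul, Real.mul_self_sqrt (hS.2 k i).1]
    exact Complex.ext rfl (hS.2 k i).2.symm
  · rw [diagonal_apply_ne _ h, hS.1 k i j h]

lemma sub_tprod_tT_eq {Xs : Tensor I₁ I₂ I₃} {Us : Tensor I₁ R I₃} {Sig : Tensor R R I₃}
    {Vs : Tensor I₂ R I₃} (hsvd : IsSkinnyTSVD Xs Us Sig Vs) {Q Qi : Tensor R R I₃}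
    (hQ : tprod Q Qi = idT R I₃) (Lk : Tensor I₁ R I₃) (Rk : Tensor I₂ R I₃) :
    Xs - tprod Lk (tT Rk) =
      -tprod (tprod (tprod Lk Q - tprod Us (sqrtT Sig)) (sqrtT Sig)) (tT Vs)
        - tprod Us (tT (tprod (tprod Rk (tT Qi) - tprod Vs (sqrtT Sig)) (sqrtT Sig)))
        - tprod (tprod Lk Q - tprod Us (sqrtT Sig))
            (tT (tprod Rk (tT Qi) - tprod Vs (sqrtT Sig))) := by
  refine fSlice_injective (funext fun k => ?_)
  have hQk : fSlice Q k * fSlice Qi k = 1 := by rw [← fSlice_tprod, hQ, fSlice_idT]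
  simp only [hsvd.decomp, fSlice_sub, fSlice_neg, fSlice_tprod, fSlice_tT]
  rw [← fSlice_sqrtT_mul_self hsvd.diag.fDiagNonneg k]
  exact Matrix.mul_mul_self_mul_conjTranspose_sub _ _ _ _ _ _ _
    (conjTranspose_fSlice_sqrtT hsvd.diag.fDiagNonneg k) hQk

def rowNormSq (A : Tensor I₁ I₂ I₃) (i : Fin I₁) : ℝ := ∑ j, ∑ k, A i j k ^ 2

lemma sqrt_rowNormSq_le_twoInfNorm (A : Tensor I₁ I₂ I₃) (i : Fin I₁) :
    √(rowNormSq A i) ≤ twoInfNorm A :=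
  le_ciSup (f := fun i => √(rowNormSq A i)) (Finite.bddAbove_range _) i

lemma infNorm_le {A : Tensor I₁ I₂ I₃} {b : ℝ} (h : ∀ i j k, |A i j k| ≤ b) (hb : 0 ≤ b) :
    infNorm A ≤ b :=
  Real.iSup_le (fun i => Real.iSup_le (fun j => Real.iSup_le (h i j) hb) hb) hb

lemma abs_tprod_tT_apply_le (X : Tensor I₁ R I₃) (Y : Tensor I₂ R I₃) (i : Fin I₁) (j : Fin I₂)
    (k : Fin I₃) : |tprod X (tT Y) i j k| ≤ √(rowNormSq X i) * √(rowNormSq Y j) := by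
  have : NeZero I₃ := ⟨k.pos.ne'⟩
  have hXY : tprod X (tT Y) i j k = ∑ p : Fin R × Fin I₃, X i p.1 p.2 * Y j p.1 (p.2 - k) := by
    simp [Fintype.sum_prod_type, tprod, tT]
  have hY : rowNormSq Y j = ∑ p : Fin R × Fin I₃, Y j p.1 (p.2 - k) ^ 2 := by
    rw [Fintype.sum_prod_type]
    exact sum_congr rfl fun l _ => (Equiv.sum_comp (Equiv.subRight k) (Y j l · ^ 2)).symm
  have hX : rowNormSq X i = ∑ p : Fin R × Fin I₃, X i p.1 p.2 ^ 2 := by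
    rw [Fintype.sum_prod_type]
    rfl
  rw [hXY, hX, hY, ← Real.sqrt_mul (sum_nonneg fun _ _ => sq_nonneg _)]
  exact Real.abs_le_sqrt (sum_mul_sq_le_sq_mul_sq _ _ _)

lemma sigmaMin_le (S : Tensor R R I₃) (k : Fin I₃) (l : Fin R) :
    sigmaMin S ≤ (fSlice S k l l).re :=
  (ciInf_le (Finite.bddBelow_range _) k).trans (ciInf_le (Finite.bddBelow_range _) l)

lemma sigmaMin_pos {S : Tensor R R I₃} (hS : FDiagPos S) (hI₃ : 0 < I₃) (hR : 0 < R) :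
    0 < sigmaMin S := by
  have : Nonempty (Fin I₃) := ⟨⟨0, hI₃⟩⟩
  have : Nonempty (Fin R) := ⟨⟨0, hR⟩⟩
  obtain ⟨k, hk⟩ := exists_eq_ciInf_of_finite (f := fun k : Fin I₃ => ⨅ i, (fSlice S k i i).re)
  obtain ⟨i, hi⟩ := exists_eq_ciInf_of_finite (f := fun i : Fin R => (fSlice S k i i).re)
  rw [sigmaMin, ← hk, ← hi]
  exact (hS.2 k i).1

lemma sigmaMin_mul_rowNormSq_le {S : Tensor R R I₃} (hS : FDiagNonneg S) (D : Tensor I₁ R I₃)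
    (i : Fin I₁) : sigmaMin S * rowNormSq D i ≤ rowNormSq (tprod D (sqrtT S)) i := by
  obtain rfl | hI₃ := Nat.eq_zero_or_pos I₃
  · simp [rowNormSq]
  have hparseval : ∀ A : Tensor I₁ R I₃,
      I₃ * rowNormSq A i = ∑ l, ∑ k, normSq (fSlice A k i l) := fun A => by
    rw [rowNormSq, mul_sum]
    exact sum_congr rfl fun l _ => (sum_normSq_dft A i l).symm
  refine le_of_mul_le_mul_left ?_ (Nat.cast_pos.2 hI₃ : (0 : ℝ) < I₃)
  rw [mul_left_comm, hparseval, hparseval, mul_sum]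
  refine sum_le_sum fun l _ => ?_
  rw [mul_sum]
  refine sum_le_sum fun k _ => ?_
  rw [fSlice_tprod, fSlice_sqrtT_eq_diagonal hS, mul_diagonal, normSq_mul, normSq_ofReal,
    Real.mul_self_sqrt (hS.2 k l).1, mul_comm]
  exact mul_le_mul_of_nonneg_left (sigmaMin_le S k l) (normSq_nonneg _)

lemma sqrt_mul_sqrt_rowNormSq_le {A : Tensor I₁ I₂ I₃} {c : ℝ} (hA : twoInfNorm A ≤ √(c / I₁))
    (i : Fin I₁) : √I₁ * √(rowNormSq A i) ≤ √c := by
  calc √I₁ * √(rowNormSq A i) ≤ √I₁ * √(c / I₁) :=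
        mul_le_mul_of_nonneg_left ((sqrt_rowNormSq_le_twoInfNorm A i).trans hA) (Real.sqrt_nonneg _)
    _ = √c := by
        rw [← Real.sqrt_mul (Nat.cast_nonneg _), mul_div_cancel₀ _ (Nat.cast_ne_zero.2 i.pos.ne')]

lemma ne_zero_of_tprod_tT_self_eq_idT {U : Tensor I₁ R I₃} (hU : tprod (tT U) U = idT R I₃)
    (hR : 0 < R) (hI₃ : 0 < I₃) : U ≠ 0 := by
  rintro rfl
  have h := congrFun (congrFun (congrFun hU ⟨0, hR⟩) ⟨0, hR⟩) ⟨0, hI₃⟩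
  simp [tprod, idT] at h

lemma twoInfNorm_pos {A : Tensor I₁ I₂ I₃} (hA : A ≠ 0) : 0 < twoInfNorm A := by
  obtain ⟨i, j, k, h⟩ : ∃ i j k, A i j k ≠ 0 := by
    by_contra! h
    exact hA (funext fun i => funext fun j => funext (h i j))
  refine (Real.sqrt_pos.2 ?_).trans_le (sqrt_rowNormSq_le_twoInfNorm A i)
  exact sum_pos' (fun _ _ => sum_nonneg fun _ _ => sq_nonneg _)
    ⟨j, mem_univ _, sum_pos' (fun _ _ => sq_nonneg _) ⟨k, mem_univ _, by positivity⟩⟩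

lemma Incoherent.mul_pos_of_ne_zero {μ : ℝ} {U : Tensor I₁ R I₃} {V : Tensor I₂ R I₃}
    (h : Incoherent μ U V) (hU : U ≠ 0) : 0 < μ * R := by
  have hpos := Real.sqrt_pos.1 ((twoInfNorm_pos hU).trans_le h.1)
  by_contra! hμ
  exact hpos.not_ge (div_nonpos_of_nonpos_of_nonneg hμ (Nat.cast_nonneg _))

lemma abs_sub_tprod_tT_apply_le {μ t : ℝ} {Xs : Tensor I₁ I₂ I₃} {Us : Tensor I₁ R I₃}
    {Sig : Tensor R R I₃} {Vs : Tensor I₂ R I₃} (hsvd : IsSkinnyTSVD Xs Us Sig Vs)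
    (hinc : Incoherent μ Us Vs) (hμR : 0 ≤ μ * R) {Lk : Tensor I₁ R I₃} {Rk : Tensor I₂ R I₃}
    {Q Qi : Tensor R R I₃} (hQ : tprod Q Qi = idT R I₃) (hσ : 0 < sigmaMin Sig) (ht₀ : 0 ≤ t)
    (ht₁ : t ≤ 1)
    (h2inf : max (√I₁ * twoInfNorm (tprod (tprod Lk Q - tprod Us (sqrtT Sig)) (sqrtT Sig)))
      (√I₂ * twoInfNorm (tprod (tprod Rk (tT Qi) - tprod Vs (sqrtT Sig)) (sqrtT Sig)))
        ≤ √(μ * R) * t * sigmaMin Sig)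
    (i : Fin I₁) (j : Fin I₂) (l : Fin I₃) :
    |(Xs - tprod Lk (tT Rk)) i j l| ≤ 3 / √((I₁ : ℝ) * I₂) * (μ * R) * t * sigmaMin Sig := by
  set Sh := sqrtT Sig
  set σ := sigmaMin Sig
  set ΔL := tprod Lk Q - tprod Us Sh
  set ΔR := tprod Rk (tT Qi) - tprod Vs Sh
  have hS := hsvd.diag.fDiagNonneg
  have hs₁ : 0 < √(I₁ : ℝ) := Real.sqrt_pos.2 (Nat.cast_pos.2 i.pos)
  have hs₂ : 0 < √(I₂ : ℝ) := Real.sqrt_pos.2 (Nat.cast_pos.2 j.pos)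
  have hsplit : |(Xs - tprod Lk (tT Rk)) i j l| ≤ |tprod (tprod ΔL Sh) (tT Vs) i j l|
      + |tprod Us (tT (tprod ΔR Sh)) i j l| + |tprod ΔL (tT ΔR) i j l| := by
    rw [sub_tprod_tT_eq hsvd hQ]
    simp only [Pi.sub_apply, Pi.neg_apply]
    exact (abs_sub _ _).trans (add_le_add ((abs_sub _ _).trans (by rw [abs_neg])) le_rfl)
  have hcross : σ * |tprod ΔL (tT ΔR) i j l|
      ≤ √(rowNormSq (tprod ΔL Sh) i) * √(rowNormSq (tprod ΔR Sh) j) :=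
    calc σ * |tprod ΔL (tT ΔR) i j l| ≤ σ * (√(rowNormSq ΔL i) * √(rowNormSq ΔR j)) :=
          mul_le_mul_of_nonneg_left (abs_tprod_tT_apply_le ΔL ΔR i j l) hσ.le
      _ = √(σ * rowNormSq ΔL i) * √(σ * rowNormSq ΔR j) := by
          rw [Real.sqrt_mul hσ.le, Real.sqrt_mul hσ.le, mul_mul_mul_comm,
            Real.mul_self_sqrt hσ.le]
      _ ≤ _ := mul_le_mul (Real.sqrt_le_sqrt (sigmaMin_mul_rowNormSq_le hS ΔL i))
          (Real.sqrt_le_sqrt (sigmaMin_mul_rowNormSq_le hS ΔR j)) (Real.sqrt_nonneg _)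
          (Real.sqrt_nonneg _)
  rw [Real.sqrt_mul (Nat.cast_nonneg _), ← Real.sq_sqrt hμR]
  refine hsplit.trans ((add_le_add (add_le_add (abs_tprod_tT_apply_le _ _ i j l)
    (abs_tprod_tT_apply_le _ _ i j l)) le_rfl).trans ?_)
  exact add_add_le_three_mul hs₁ hs₂ hσ ht₀ ht₁ (Real.sqrt_nonneg _) (Real.sqrt_nonneg _)
    (Real.sqrt_nonneg _) (Real.sqrt_nonneg _)
    ((mul_le_mul_of_nonneg_left (sqrt_rowNormSq_le_twoInfNorm _ i) hs₁.le).trans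
      ((le_max_left _ _).trans h2inf))
    ((mul_le_mul_of_nonneg_left (sqrt_rowNormSq_le_twoInfNorm _ j) hs₂.le).trans
      ((le_max_right _ _).trans h2inf))
    (sqrt_mul_sqrt_rowNormSq_le hinc.1 i) (sqrt_mul_sqrt_rowNormSq_le hinc.2 j) hcross

end RTPCA

theorem infNorm_error_bound_general
    {I₁ I₂ I₃ R : ℕ} (μ : ℝ)
    (Xs : Tensor I₁ I₂ I₃) (Us : Tensor I₁ R I₃) (Sig : Tensor R R I₃) (Vs : Tensor I₂ R I₃)
    (hsvd : IsSkinnyTSVD Xs Us Sig Vs)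
    (hinc : Incoherent μ Us Vs)
    (τ : ℝ) (hτ₀ : 0 < τ) (hτ₁ : τ ≤ 1) (k : ℕ)
    (Lk : Tensor I₁ R I₃) (Rk : Tensor I₂ R I₃)
    (Q Qi : Tensor R R I₃)
    (hopt : IsOptAlign Lk (tprod Us (sqrtT Sig)) Rk (tprod Vs (sqrtT Sig)) (sqrtT Sig) Q Qi)
    (h2inf : max (Real.sqrt I₁ *
                    twoInfNorm (tprod (tprod Lk Q - tprod Us (sqrtT Sig)) (sqrtT Sig)))
                 (Real.sqrt I₂ *
                    twoInfNorm (tprod (tprod Rk (tT Qi) - tprod Vs (sqrtT Sig)) (sqrtT Sig)))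
             ≤ Real.sqrt (μ * R) * τ ^ k * sigmaMin Sig) :
    infNorm (Xs - tprod Lk (tT Rk))
      ≤ 3 / Real.sqrt ((I₁ : ℝ) * I₂) * (μ * R) * τ ^ k * sigmaMin Sig := by
  obtain rfl | hR := Nat.eq_zero_or_pos R
  · refine infNorm_le (fun _ _ _ => ?_) ?_ <;> simp [hsvd.decomp, RTPCA.tprod]
  obtain rfl | hI₃ := Nat.eq_zero_or_pos I₃
  · exact infNorm_le (fun _ _ l => l.elim0) (by simp [sigmaMin])
  have hσ := sigmaMin_pos hsvd.diag hI₃ hR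
  have hμR := hinc.mul_pos_of_ne_zero (ne_zero_of_tprod_tT_self_eq_idT hsvd.orthU hR hI₃)
  have hτk := pow_nonneg hτ₀.le k
  refine infNorm_le (abs_sub_tprod_tT_apply_le hsvd hinc hμR.le hopt.1.1 hσ hτk
    (pow_le_one₀ hτ₀.le hτ₁) h2inf) ?_
  positivity

/-- entrywise error bound for the low-rank estimate. -/
theorem infNorm_error_bound
    {I₁ I₂ I₃ R : ℕ} (μ : ℝ)
    (Xs : Tensor I₁ I₂ I₃) (Us : Tensor I₁ R I₃) (Sig : Tensor R R I₃) (Vs : Tensor I₂ R I₃)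
    (hsvd : IsSkinnyTSVD Xs Us Sig Vs)
    (hinc : Incoherent μ Us Vs)
    (ε τ : ℝ) (hε₀ : 0 < ε) (hε₁ : ε < 1) (hτ₀ : 0 < τ) (hτ₁ : τ ≤ 1) (k : ℕ)
    (Lk : Tensor I₁ R I₃) (Rk : Tensor I₂ R I₃)
    (Q Qi : Tensor R R I₃)
    (hopt : IsOptAlign Lk (tprod Us (sqrtT Sig)) Rk (tprod Vs (sqrtT Sig)) (sqrtT Sig) Q Qi)
    (hdist : distT Lk (tprod Us (sqrtT Sig)) Rk (tprod Vs (sqrtT Sig)) (sqrtT Sig)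
      ≤ ε / Real.sqrt I₃ * τ ^ k * sigmaMin Sig)
    (h2inf : max (Real.sqrt I₁ *
                    twoInfNorm (tprod (tprod Lk Q - tprod Us (sqrtT Sig)) (sqrtT Sig)))
                 (Real.sqrt I₂ *
                    twoInfNorm (tprod (tprod Rk (tT Qi) - tprod Vs (sqrtT Sig)) (sqrtT Sig)))
             ≤ Real.sqrt (μ * R) * τ ^ k * sigmaMin Sig) :
    infNorm (Xs - tprod Lk (tT Rk))
      ≤ 3 / Real.sqrt ((I₁ : ℝ) * I₂) * (μ * R) * τ ^ k * sigmaMin Sig :=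
  infNorm_error_bound_general μ Xs Us Sig Vs hsvd hinc τ hτ₀ hτ₁ k Lk Rk Q Qi hopt h2inf
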